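/- arXiv:2202.03346 — 3 statements merged into one kernel-verified Lean document; each statement's English description precedes it below -/
import Mathlib

section
/- Assume σ_B^d < (s/(1265 κ))·√(m/(n M h_c)). Then for every step-size α with 0 < α ≤ (1/(κ ℓ))·(m/(135 M s)), the inequality α g6 ≤ (g5/2)·(δ2/δ3) − g4·(δ1/δ3) − g7·(δ4/δ3) holds; in particular the right-hand side is positive. -/
set_option maxHeartbeats 2000000


/-- If `σ_B^d < (s/(1265 κ))·√(m/(n M h_c))`, then for every step-size
`α` with `0 < α ≤ (1/(κ ℓ))·(m/(135 M s))`, the inequality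
`α g6 ≤ (g5/2)(δ2/δ3) − g4 (δ1/δ3) − g7 (δ4/δ3)` holds; in particular the right-hand
side is positive. -/
theorem absaga_second_row_inequality
    (n m M : ℕ) (hn : 0 < n) (hm : 0 < m) (hM : 0 < M) (hmM : m ≤ M)
    (μ ℓ : ℝ) (hμ : 0 < μ) (hμℓ : μ ≤ ℓ)
    (πr πc : Fin n → ℝ)
    (hπr : ∀ i, 0 < πr i) (hπc : ∀ i, 0 < πc i)
    (hπrsum : ∑ i, πr i = 1) (hπcsum : ∑ i, πc i = 1)
    (πrMax πrMin πcMax πcMin : ℝ)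
    (hπrMax : IsGreatest (Set.range πr) πrMax)
    (hπrMin : IsLeast (Set.range πr) πrMin)
    (hπcMax : IsGreatest (Set.range πc) πcMax)
    (hπcMin : IsLeast (Set.range πc) πcMin)
    (σA σB : ℝ) (hσA : σA ∈ Set.Ioo (0:ℝ) 1) (hσB : σB ∈ Set.Ioo (0:ℝ) 1)
    (c d : ℕ) (hcpos : 0 < c) (hdpos : 0 < d)
    (κ hr hcc s : ℝ)
    (hκ : κ = ℓ / μ)
    (hhr : hr = πrMax / πrMin) (hhcc : hcc = πcMax / πcMin)
    (hs : s = ∑ i, πr i * πc i)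
    (g1 g2 g3 g4 g5 g6 g7 : ℝ)
    (hg1 : g1 = 40 * ℓ^2 * n * (∑ i, (πc i)^2) * πrMax / (1 - σA^(2*c)))
    (hg2 : g2 = 16 * ℓ^2 * (∑ i, (πc i)^2) * πrMax / (1 - σA^(2*c)))
    (hg3 : g3 = 8 * ℓ^2 * πrMax * πcMax / (1 - σA^(2*c)))
    (hg4 : g4 = 8 * ℓ^2 * n * s / (μ * πrMin))
    (hg5 : g5 = μ * n * s / 4)
    (hg6 : g6 = 3 * ℓ^2 * n * s^2)
    (hg7 : g7 = 5 * ℓ^2 * (∑ i, (πr i)^2) * πcMax / (μ * s))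
    (τ1 τ2 : ℝ)
    (hτ1 : τ1 = 1 - 40000 * n * σB^(2*d) * κ^2 * M * hcc / (m * (1 - σB^(2*d)) * s^2))
    (hτ2 : τ2 = 1 + 40000 * n * κ^2 * M * hcc / (s^2 * τ1 * m * (1 - σB^(2*d))))
    (δ1 δ2 δ3 δ4 : ℝ)
    (hδ1 : δ1 = 1)
    (hδ2 : δ2 = 64 * τ2 * κ^2 / πrMin)
    (hδ3 : δ3 = 130 * τ2 * κ^2 * M / (m * πrMin))
    (hδ4 : δ4 = 40000 * n * κ^2 * M / (m * τ1 * (1 - σB^(2*d)) * πrMin * πcMin))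
    (hgapB : σB^d < (s / (1265 * κ)) * Real.sqrt (m / (n * M * hcc)))
    (α : ℝ) (hα0 : 0 < α)
    (hα : α ≤ (1 / (κ * ℓ)) * (m / (135 * M * s))) :
    α * g6 ≤ g5 / 2 * (δ2 / δ3) - g4 * (δ1 / δ3) - g7 * (δ4 / δ3) ∧
      0 < g5 / 2 * (δ2 / δ3) - g4 * (δ1 / δ3) - g7 * (δ4 / δ3) := by
  have hl0 : 0 < ℓ := lt_of_lt_of_le hμ hμℓ
  have hκ1 : 1 ≤ κ := by rw [hκ, le_div_iff₀ hμ]; linarith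
  have hκ0 : 0 < κ := lt_of_lt_of_le one_pos hκ1
  have hℓeq : ℓ = κ * μ := by rw [hκ]; field_simp
  have hn0 : (0:ℝ) < n := by exact_mod_cast hn
  have hn1 : (1:ℝ) ≤ n := by exact_mod_cast hn
  have hm0 : (0:ℝ) < m := by exact_mod_cast hm
  have hM0 : (0:ℝ) < M := by exact_mod_cast hM
  have hmM' : (m:ℝ) ≤ M := by exact_mod_cast hmM
  haveI : Nonempty (Fin n) := Fin.pos_iff_nonempty.mp hn
  have hs0 : 0 < s := by
    rw [hs]
    exact Finset.sum_pos (fun i _ => mul_pos (hπr i) (hπc i)) Finset.univ_nonempty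
  have hπc1 : ∀ i, πc i ≤ 1 := fun i => by
    rw [← hπcsum]; exact Finset.single_le_sum (fun j _ => (hπc j).le) (Finset.mem_univ i)
  have hπr1 : ∀ i, πr i ≤ 1 := fun i => by
    rw [← hπrsum]; exact Finset.single_le_sum (fun j _ => (hπr j).le) (Finset.mem_univ i)
  have hs1 : s ≤ 1 := by
    rw [hs, ← hπrsum]
    exact Finset.sum_le_sum fun i _ => mul_le_of_le_one_right (hπr i).le (hπc1 i)
  have hR0 : 0 < ∑ i, (πr i)^2 :=
    Finset.sum_pos (fun i _ => pow_pos (hπr i) 2) Finset.univ_nonempty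
  have hR1 : (∑ i, (πr i)^2) ≤ 1 := by
    rw [← hπrsum]
    exact Finset.sum_le_sum fun i _ => by
      rw [sq]; exact mul_le_of_le_one_right (hπr i).le (hπr1 i)
  have hπrMin0 : 0 < πrMin := by
    obtain ⟨i, hi⟩ := hπrMin.1; rw [← hi]; exact hπr i
  have hπcMin0 : 0 < πcMin := by
    obtain ⟨i, hi⟩ := hπcMin.1; rw [← hi]; exact hπc i
  have hπcMM : πcMin ≤ πcMax := by
    obtain ⟨i, hi⟩ := hπcMin.1; rw [← hi]; exact hπcMax.2 (Set.mem_range_self i)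
  have hcc1 : 1 ≤ hcc := by rw [hhcc, le_div_iff₀ hπcMin0]; linarith
  have hcc0 : 0 < hcc := lt_of_lt_of_le one_pos hcc1
  have hπcMaxEq : πcMax = hcc * πcMin := by rw [hhcc]; field_simp
  set p := σB^(2*d) with hpdef
  have hp0 : 0 < p := pow_pos hσB.1 _
  have hr0 : (0:ℝ) < (m:ℝ)/(n*M*hcc) := by positivity
  have hsq : p < s^2 * m / (1600225 * κ^2 * ((n:ℝ) * M * hcc)) := by
    have hb0 : 0 ≤ σB ^ d := pow_nonneg hσB.1.le d
    have h2 := mul_lt_mul'' hgapB hgapB hb0 hb0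
    have h4 : Real.sqrt ((m:ℝ)/(n*M*hcc)) * Real.sqrt ((m:ℝ)/(n*M*hcc))
        = (m:ℝ)/(n*M*hcc) := Real.mul_self_sqrt hr0.le
    have h3 : (s / (1265*κ) * Real.sqrt ((m:ℝ)/(n*M*hcc)))
          * (s / (1265*κ) * Real.sqrt ((m:ℝ)/(n*M*hcc)))
        = s^2 * m / (1600225 * κ^2 * ((n:ℝ) * M * hcc)) := by
      calc (s / (1265*κ) * Real.sqrt ((m:ℝ)/(n*M*hcc)))
          * (s / (1265*κ) * Real.sqrt ((m:ℝ)/(n*M*hcc)))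
          = (Real.sqrt ((m:ℝ)/(n*M*hcc)) * Real.sqrt ((m:ℝ)/(n*M*hcc)))
            * (s / (1265*κ) * (s / (1265*κ))) := by ring
        _ = ((m:ℝ)/(n*M*hcc)) * (s / (1265*κ) * (s / (1265*κ))) := by rw [h4]
        _ = s^2 * m / (1600225 * κ^2 * ((n:ℝ) * M * hcc)) := by
            field_simp
            ring
    have hpe : p = σB^d * σB^d := by rw [hpdef, two_mul, pow_add]
    rw [hpe, ← h3]; exact h2
  have hden0 : 0 < 1600225 * κ^2 * ((n:ℝ) * M * hcc) := by positivity
  have hpkey : p * (1600225 * κ^2 * ((n:ℝ) * M * hcc)) < s^2 * m := by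
    rw [lt_div_iff₀ hden0] at hsq; exact hsq
  have hk2 : (1:ℝ) ≤ κ^2 := by
    calc (1:ℝ) = 1*1 := by ring
      _ ≤ κ*κ := mul_le_mul hκ1 hκ1 zero_le_one hκ0.le
      _ = κ^2 := (sq κ).symm
  have hmD : (m:ℝ) ≤ κ^2 * ((n:ℝ) * M * hcc) := by
    have h1 : (M:ℝ) ≤ M * hcc := le_mul_of_one_le_right hM0.le hcc1
    have h2 : (M:ℝ) * hcc ≤ (n:ℝ) * (M * hcc) := le_mul_of_one_le_left (by positivity) hn1
    have h3 : (n:ℝ) * (M * hcc) ≤ κ^2 * ((n:ℝ) * (M * hcc)) :=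
      le_mul_of_one_le_left (by positivity) hk2
    linarith [hmM', h1, h2, h3]
  have hs2le : s^2 ≤ 1 := by rw [sq]; exact mul_le_one₀ hs1 hs0.le hs1
  have hps : p ≤ 1/1600225 := by
    have h5 : p * (m:ℝ) ≤ p * (κ^2 * ((n:ℝ) * M * hcc)) :=
      mul_le_mul_of_nonneg_left hmD hp0.le
    have h6 : s^2 * (m:ℝ) ≤ m := by
      have := mul_le_mul_of_nonneg_right hs2le hm0.le
      linarith
    have h7 : (p * 1600225) * (m:ℝ) < 1 * m := by linarith [hpkey, h5, h6]
    have h8 : p * 1600225 < 1 := lt_of_mul_lt_mul_right h7 hm0.le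
    linarith
  have h1p : (1:ℝ)/2 ≤ 1 - p := by linarith
  have h1p0 : (0:ℝ) < 1 - p := by linarith
  have hfrac_lt : 40000 * (n:ℝ) * p * κ^2 * M * hcc / (m * (1-p) * s^2) < 1 := by
    rw [div_lt_one (by positivity)]
    have h7 : (1:ℝ)/2 * (m * s^2) ≤ (1-p) * (m * s^2) :=
      mul_le_mul_of_nonneg_right h1p (by positivity)
    have h8 : (0:ℝ) ≤ (m:ℝ) * s^2 := by positivity
    linarith [hpkey, h7, h8]
  have hτ10 : 0 < τ1 := by rw [hτ1]; linarith [hfrac_lt]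
  have hτ1le : τ1 ≤ 1 := by
    rw [hτ1]
    have : (0:ℝ) ≤ 40000 * (n:ℝ) * p * κ^2 * M * hcc / (m * (1-p) * s^2) := by positivity
    linarith
  set X := 40000 * (n:ℝ) * κ^2 * M * hcc / (s^2 * m * (1-p)) with hXdef
  have hX0 : 0 < X := by rw [hXdef]; positivity
  have hX40 : (40000:ℝ) ≤ X := by
    rw [hXdef, le_div_iff₀ (by positivity)]
    have hA1 : s^2 * (m:ℝ) * (1-p) ≤ (M:ℝ) := by
      have h9 : s^2 * (m:ℝ) ≤ m := by
        have := mul_le_mul_of_nonneg_right hs2le hm0.le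
        linarith
      have h10 : (0:ℝ) ≤ s^2 * (m:ℝ) * p := by positivity
      linarith [hmM']
    have hB1 : (M:ℝ) ≤ M * hcc := le_mul_of_one_le_right hM0.le hcc1
    have hB2 : (M:ℝ) * hcc ≤ κ^2 * ((M:ℝ) * hcc) := le_mul_of_one_le_left (by positivity) hk2
    have hB3 : κ^2 * ((M:ℝ) * hcc) ≤ (n:ℝ) * (κ^2 * ((M:ℝ) * hcc)) :=
      le_mul_of_one_le_left (by positivity) hn1
    linarith [hA1, hB1, hB2, hB3]
  have hττ : τ2 * τ1 = τ1 + X := by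
    rw [hτ2, hXdef]
    field_simp
  have hτ21 : 1 ≤ τ2 := by
    rw [hτ2]
    have : (0:ℝ) ≤ 40000 * (n:ℝ) * κ^2 * M * hcc / (s^2 * τ1 * m * (1-p)) := by positivity
    linarith
  have hτ20 : 0 < τ2 := lt_of_lt_of_le one_pos hτ21
  have hT1 : g5/2 * (δ2/δ3) = 4*μ*(n:ℝ)*s*m/(65*M) := by
    rw [hg5, hδ2, hδ3]
    field_simp
    ring
  have hT2 : g4 * (δ1/δ3) = 4*μ*(n:ℝ)*s*m/(65*(M*τ2)) := by
    rw [hg4, hδ1, hδ3, hℓeq]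
    field_simp
    ring
  have hT3 : g7 * (δ4/δ3) = μ*s*(∑ i, (πr i)^2)*m*X/(26*(M*(τ1*τ2))) := by
    rw [hg7, hδ4, hδ3, hℓeq, hπcMaxEq, hXdef]
    field_simp
    ring
  have hg60 : 0 < g6 := by rw [hg6]; positivity
  have step1 : α * g6 ≤ μ*(n:ℝ)*m*s/(45*M) := by
    have h1 : α * g6 ≤ (1/(κ*ℓ)) * ((m:ℝ)/(135*M*s)) * g6 :=
      mul_le_mul_of_nonneg_right hα hg60.le
    have h2 : (1/(κ*ℓ)) * ((m:ℝ)/(135*M*s)) * g6 = μ*(n:ℝ)*m*s/(45*M) := by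
      rw [hg6, hℓeq]
      field_simp
      ring
    linarith
  have hcomb : 4*μ*(n:ℝ)*s*m/(65*M) - 4*μ*(n:ℝ)*s*m/(65*(M*τ2))
      = 4*μ*(n:ℝ)*s*m*X/(65*(M*(τ1*τ2))) := by
    have hXτ : X = τ2*τ1 - τ1 := by linarith [hττ]
    rw [hXτ]
    field_simp
  have hnum : 0 ≤ 45*(104*(n:ℝ) - 65*(∑ i, (πr i)^2))*X - 1690*(n:ℝ)*(τ1*τ2) := by
    have hττle : τ1*τ2 ≤ 1 + X := by linarith [hττ, hτ1le]
    have hRn : (∑ i, (πr i)^2) ≤ (n:ℝ) := le_trans hR1 hn1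
    have f1 := mul_le_mul_of_nonneg_right hRn hX0.le
    have f2 := mul_le_mul_of_nonneg_left hττle (by positivity : (0:ℝ) ≤ 1690*(n:ℝ))
    have f3 := mul_nonneg (by linarith : (0:ℝ) ≤ 65*X - 1690) (by linarith : (0:ℝ) ≤ (n:ℝ))
    linarith [f1, f2, f3]
  have hmid : μ*(n:ℝ)*m*s/(45*M)
      ≤ 4*μ*(n:ℝ)*s*m*X/(65*(M*(τ1*τ2))) - μ*s*(∑ i, (πr i)^2)*m*X/(26*(M*(τ1*τ2))) := by
    rw [← sub_nonneg]
    have hid : 4*μ*(n:ℝ)*s*m*X/(65*(M*(τ1*τ2))) - μ*s*(∑ i, (πr i)^2)*m*X/(26*(M*(τ1*τ2)))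
        - μ*(n:ℝ)*m*s/(45*M)
        = μ*s*m*(45*(104*(n:ℝ) - 65*(∑ i, (πr i)^2))*X - 1690*(n:ℝ)*(τ1*τ2))
          / (76050*(M*(τ1*τ2))) := by
      field_simp
      ring
    rw [hid]
    apply div_nonneg _ (by positivity)
    exact mul_nonneg (by positivity) hnum
  have main : α * g6 ≤ g5/2 * (δ2/δ3) - g4 * (δ1/δ3) - g7 * (δ4/δ3) := by
    rw [hT1, hT2, hT3]
    linarith [step1, hmid, hcomb]
  exact ⟨main, lt_of_lt_of_le (mul_pos hα0 hg60) main⟩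
end

section
/- Assume σ_B^d ≤ (s/(1265 κ))·√(m/(n M h_c)). Then for every step-size α with 0 < α ≤ 1/(225 μ n s), the inequality (α g5)/2 ≤ 1/4 − (σ_B^{2d}/δ4)·(146 n δ1/((1−σ_B^{2d}) π̲_r π̲_c) + 97 n δ2/((1−σ_B^{2d}) π̲_c) + 26 δ3/((1−σ_B^{2d}) π̲_c)) holds; in particular the right-hand side is positive. -/
set_option maxHeartbeats 1000000


/-- If `σ_B^d ≤ (s/(1265 κ))·√(m/(n M h_c))`, then for every step-size
`α` with `0 < α ≤ 1/(225 μ n s)`, the inequality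
`(α g5)/2 ≤ 1/4 − (σ_B^{2d}/δ4)(146 n δ1/((1−σ_B^{2d}) π̲_r π̲_c)
 + 97 n δ2/((1−σ_B^{2d}) π̲_c) + 26 δ3/((1−σ_B^{2d}) π̲_c))` holds; in particular the
right-hand side is positive. -/
theorem absaga_fourth_row_inequality
    (n m M : ℕ) (hn : 0 < n) (hm : 0 < m) (hM : 0 < M) (hmM : m ≤ M)
    (μ ℓ : ℝ) (hμ : 0 < μ) (hμℓ : μ ≤ ℓ)
    (πr πc : Fin n → ℝ)
    (hπr : ∀ i, 0 < πr i) (hπc : ∀ i, 0 < πc i)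
    (hπrsum : ∑ i, πr i = 1) (hπcsum : ∑ i, πc i = 1)
    (πrMax πrMin πcMax πcMin : ℝ)
    (hπrMax : IsGreatest (Set.range πr) πrMax)
    (hπrMin : IsLeast (Set.range πr) πrMin)
    (hπcMax : IsGreatest (Set.range πc) πcMax)
    (hπcMin : IsLeast (Set.range πc) πcMin)
    (σA σB : ℝ) (hσA : σA ∈ Set.Ioo (0:ℝ) 1) (hσB : σB ∈ Set.Ioo (0:ℝ) 1)
    (c d : ℕ) (hcpos : 0 < c) (hdpos : 0 < d)
    (κ hr hcc s : ℝ)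
    (hκ : κ = ℓ / μ)
    (hhr : hr = πrMax / πrMin) (hhcc : hcc = πcMax / πcMin)
    (hs : s = ∑ i, πr i * πc i)
    (g1 g2 g3 g4 g5 g6 g7 : ℝ)
    (hg1 : g1 = 40 * ℓ^2 * n * (∑ i, (πc i)^2) * πrMax / (1 - σA^(2*c)))
    (hg2 : g2 = 16 * ℓ^2 * (∑ i, (πc i)^2) * πrMax / (1 - σA^(2*c)))
    (hg3 : g3 = 8 * ℓ^2 * πrMax * πcMax / (1 - σA^(2*c)))
    (hg4 : g4 = 8 * ℓ^2 * n * s / (μ * πrMin))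
    (hg5 : g5 = μ * n * s / 4)
    (hg6 : g6 = 3 * ℓ^2 * n * s^2)
    (hg7 : g7 = 5 * ℓ^2 * (∑ i, (πr i)^2) * πcMax / (μ * s))
    (τ1 τ2 : ℝ)
    (hτ1 : τ1 = 1 - 40000 * n * σB^(2*d) * κ^2 * M * hcc / (m * (1 - σB^(2*d)) * s^2))
    (hτ2 : τ2 = 1 + 40000 * n * κ^2 * M * hcc / (s^2 * τ1 * m * (1 - σB^(2*d))))
    (δ1 δ2 δ3 δ4 : ℝ)
    (hδ1 : δ1 = 1)
    (hδ2 : δ2 = 64 * τ2 * κ^2 / πrMin)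
    (hδ3 : δ3 = 130 * τ2 * κ^2 * M / (m * πrMin))
    (hδ4 : δ4 = 40000 * n * κ^2 * M / (m * τ1 * (1 - σB^(2*d)) * πrMin * πcMin))
    (hgapB : σB^d ≤ (s / (1265 * κ)) * Real.sqrt (m / (n * M * hcc)))
    (α : ℝ) (hα0 : 0 < α)
    (hα : α ≤ 1 / (225 * μ * n * s)) :
    α * g5 / 2 ≤ 1/4 - (σB^(2*d) / δ4) *
        (146 * n * δ1 / ((1 - σB^(2*d)) * πrMin * πcMin)
          + 97 * n * δ2 / ((1 - σB^(2*d)) * πcMin)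
          + 26 * δ3 / ((1 - σB^(2*d)) * πcMin)) ∧
      0 < 1/4 - (σB^(2*d) / δ4) *
        (146 * n * δ1 / ((1 - σB^(2*d)) * πrMin * πcMin)
          + 97 * n * δ2 / ((1 - σB^(2*d)) * πcMin)
          + 26 * δ3 / ((1 - σB^(2*d)) * πcMin)) := by
  obtain ⟨hσB0, hσB1⟩ := hσB
  set b := σB^(2*d) with hbdef
  have hb0 : 0 < b := pow_pos hσB0 _
  have hb1 : b < 1 := pow_lt_one₀ hσB0.le hσB1 (by omega)
  have hb1' : 0 < 1 - b := by linarith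
  -- positivity of extrema
  have hπrMin0 : 0 < πrMin := by
    obtain ⟨i, hi⟩ := hπrMin.1; exact hi ▸ hπr i
  have hπcMin0 : 0 < πcMin := by
    obtain ⟨i, hi⟩ := hπcMin.1; exact hi ▸ hπc i
  have hπcMax0 : 0 < πcMax := by
    obtain ⟨i, hi⟩ := hπcMax.1; exact hi ▸ hπc i
  have hhcc1 : 1 ≤ hcc := by
    rw [hhcc]
    rw [le_div_iff₀ hπcMin0, one_mul]
    obtain ⟨i, hi⟩ := hπcMin.1
    exact hi ▸ hπcMax.2 (Set.mem_range_self i)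
  have hhcc0 : 0 < hcc := lt_of_lt_of_le one_pos hhcc1
  -- kappa
  have hκ1 : 1 ≤ κ := by rw [hκ, le_div_iff₀ hμ, one_mul]; exact hμℓ
  have hκ0 : 0 < κ := lt_of_lt_of_le one_pos hκ1
  have hκ2 : 1 ≤ κ^2 := by
    have h := mul_le_mul hκ1 hκ1 zero_le_one hκ0.le
    rw [pow_two]; linarith
  -- casts
  have hn' : (1:ℝ) ≤ (n:ℝ) := by exact_mod_cast hn
  have hm' : (1:ℝ) ≤ (m:ℝ) := by exact_mod_cast hm
  have hM' : (1:ℝ) ≤ (M:ℝ) := by exact_mod_cast hM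
  have hmM' : (m:ℝ) ≤ (M:ℝ) := by exact_mod_cast hmM
  have hn0 : (0:ℝ) < n := by linarith
  have hm0 : (0:ℝ) < m := by linarith
  have hM0 : (0:ℝ) < M := by linarith
  -- s bounds
  have hs0 : 0 < s := by
    rw [hs]
    have : Nonempty (Fin n) := ⟨⟨0, hn⟩⟩
    exact Finset.sum_pos (fun i _ => mul_pos (hπr i) (hπc i)) Finset.univ_nonempty
  have hπc1 : ∀ i, πc i ≤ 1 := by
    intro i
    calc πc i ≤ ∑ j, πc j :=
      Finset.single_le_sum (fun j _ => (hπc j).le) (Finset.mem_univ i)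
    _ = 1 := hπcsum
  have hs1 : s ≤ 1 := by
    rw [hs]
    calc ∑ i, πr i * πc i ≤ ∑ i, πr i * 1 :=
          Finset.sum_le_sum (fun i _ => mul_le_mul_of_nonneg_left (hπc1 i) (hπr i).le)
    _ = 1 := by simp [hπrsum]
  -- key bound from hgapB
  have hbK : b * (1600225 * κ^2 * ((n:ℝ) * M * hcc)) ≤ s^2 * m := by
    have hd0 : 0 ≤ (m:ℝ) / ((n:ℝ) * M * hcc) := by positivity
    have hsq : b = (σB^d)^2 := by rw [hbdef, ← pow_mul, mul_comm]
    have h1 : (σB^d)^2 ≤ ((s / (1265 * κ)) * Real.sqrt ((m:ℝ) / ((n:ℝ) * M * hcc)))^2 := by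
      apply pow_le_pow_left₀ (pow_nonneg hσB0.le d) hgapB
    rw [mul_pow, Real.sq_sqrt hd0, div_pow] at h1
    have h2 : b ≤ s^2 / (1265*κ)^2 * ((m:ℝ) / ((n:ℝ) * M * hcc)) := hsq ▸ h1
    have hden : (0:ℝ) < (1265*κ)^2 * ((n:ℝ) * M * hcc) := by positivity
    rw [div_mul_div_comm, le_div_iff₀ hden] at h2
    linear_combination h2
  have hs2 : s^2 ≤ 1 := by
    rw [pow_two]; exact mul_le_one₀ hs1 hs0.le hs1
  have hQnn : (0:ℝ) ≤ (m:ℝ) * s^2 := by positivity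
  have hbsmall : b ≤ 1 / 1600225 := by
    have hA : (m:ℝ) ≤ (n:ℝ) * M * hcc := by
      have h1 : (M:ℝ) ≤ (n:ℝ) * M := le_mul_of_one_le_left hM0.le hn'
      have h2 : (n:ℝ) * M ≤ (n:ℝ) * M * hcc := le_mul_of_one_le_right (by positivity) hhcc1
      linarith
    have hB : (m:ℝ) ≤ κ^2 * ((n:ℝ) * M * hcc) := le_trans hA (le_mul_of_one_le_left (by positivity) hκ2)
    have hC : b * (1600225 * (m:ℝ)) ≤ b * (1600225 * (κ^2 * ((n:ℝ) * M * hcc))) := by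
      apply mul_le_mul_of_nonneg_left _ hb0.le
      linarith
    have hD : s^2 * (m:ℝ) ≤ m := mul_le_of_le_one_left hm0.le hs2
    have hE : (1600225 * b) * (m:ℝ) ≤ 1 * (m:ℝ) := by linarith [hC, hbK, hD]
    have := le_of_mul_le_mul_right hE hm0
    linarith
  -- tau1 bounds
  have hE1 : (0:ℝ) < (m:ℝ) * (1 - b) * s^2 := by positivity
  have hfrac1 : 40000 * (n:ℝ) * b * κ^2 * M * hcc / ((m:ℝ) * (1 - b) * s^2) ≤ 1/40 := by
    rw [div_le_div_iff₀ hE1 (by norm_num : (0:ℝ) < 40)]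
    have hbm : b * ((m:ℝ) * s^2) ≤ 1/1600225 * ((m:ℝ) * s^2) :=
      mul_le_mul_of_nonneg_right hbsmall hQnn
    linarith [hbK, hbm, hQnn]
  have hfrac1nn : 0 ≤ 40000 * (n:ℝ) * b * κ^2 * M * hcc / ((m:ℝ) * (1 - b) * s^2) := by
    positivity
  have hτ1lb : 39/40 ≤ τ1 := by rw [hτ1]; linarith
  have hτ1ub : τ1 ≤ 1 := by rw [hτ1]; linarith
  have hτ1pos : 0 < τ1 := by linarith
  -- tau2 bound
  have hE2 : (0:ℝ) < s^2 * τ1 * m * (1 - b) := by positivity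
  have hfrac2 : b * (40000 * (n:ℝ) * κ^2 * M * hcc) / (s^2 * τ1 * m * (1 - b)) ≤ 1/39 := by
    rw [div_le_div_iff₀ hE2 (by norm_num : (0:ℝ) < 39)]
    have hbm : b * ((m:ℝ) * s^2) ≤ 1/1600225 * ((m:ℝ) * s^2) :=
      mul_le_mul_of_nonneg_right hbsmall hQnn
    have hq0 : (0:ℝ) ≤ (m:ℝ) * s^2 * (1 - b) := by positivity
    have hq1 : (39/40) * ((m:ℝ) * s^2 * (1 - b)) ≤ τ1 * ((m:ℝ) * s^2 * (1 - b)) :=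
      mul_le_mul_of_nonneg_right hτ1lb hq0
    linarith [hbK, hbm, hq1, hQnn]
  have hτ2ge1 : 1 ≤ τ2 := by
    rw [hτ2]
    have : 0 ≤ 40000 * (n:ℝ) * κ^2 * M * hcc / (s^2 * τ1 * m * (1 - b)) := by positivity
    linarith
  have hbτ2 : b * τ2 ≤ 1/30 := by
    rw [hτ2, mul_add, mul_one, ← mul_div_assoc]
    linarith [hfrac2, hbsmall]
  have hbτ2nn : 0 ≤ b * τ2 := by positivity
  -- exact identity for the penalty term
  have hR : (b / δ4) * (146 * n * δ1 / ((1 - b) * πrMin * πcMin)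
          + 97 * n * δ2 / ((1 - b) * πcMin)
          + 26 * δ3 / ((1 - b) * πcMin))
      = 146 * b * m * τ1 / (40000 * κ^2 * M)
        + 6208 * (b * τ2) * m * τ1 / (40000 * M)
        + 3380 * (b * τ2) * τ1 / (40000 * n) := by
    rw [hδ1, hδ2, hδ3, hδ4]
    field_simp
    ring
  -- bounds on each term
  have hT1 : 146 * b * m * τ1 / (40000 * κ^2 * M) ≤ 146/1200000 := by
    rw [div_le_div_iff₀ (by positivity) (by norm_num : (0:ℝ) < 1200000)]
    have p1 : b * τ1 ≤ 1/30 := by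
      have h := mul_le_mul_of_nonneg_left hτ1ub hb0.le
      have : b * 1 = b := mul_one b
      linarith [hbsmall]
    have p2 : (b * τ1) * (m:ℝ) ≤ (1/30) * (m:ℝ) := mul_le_mul_of_nonneg_right p1 hm0.le
    have p3 : (m:ℝ) ≤ κ^2 * (M:ℝ) := le_trans hmM' (le_mul_of_one_le_left hM0.le hκ2)
    linarith [p2, p3]
  have hT2 : 6208 * (b * τ2) * m * τ1 / (40000 * M) ≤ 6208/1200000 := by
    rw [div_le_div_iff₀ (by positivity) (by norm_num : (0:ℝ) < 1200000)]
    have p1 : (b * τ2) * τ1 ≤ (1/30) * 1 :=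
      mul_le_mul hbτ2 hτ1ub hτ1pos.le (by norm_num)
    have p2 : ((b * τ2) * τ1) * (m:ℝ) ≤ ((1/30) * 1) * (m:ℝ) :=
      mul_le_mul_of_nonneg_right p1 hm0.le
    linarith [p2, hmM']
  have hT3 : 3380 * (b * τ2) * τ1 / (40000 * n) ≤ 3380/1200000 := by
    rw [div_le_div_iff₀ (by positivity) (by norm_num : (0:ℝ) < 1200000)]
    have p1 : (b * τ2) * τ1 ≤ (1/30) * 1 :=
      mul_le_mul hbτ2 hτ1ub hτ1pos.le (by norm_num)
    linarith [p1, hn']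
  -- the LHS bound
  have hμns : (0:ℝ) < 225 * μ * (n:ℝ) * s := by positivity
  have hLHS : α * g5 / 2 ≤ 1/1800 := by
    rw [hg5]
    have h1 : α * (225 * μ * (n:ℝ) * s) ≤ 1 := by
      rw [← le_div_iff₀ hμns]; exact hα
    linarith [h1]
  have hRle : (b / δ4) * (146 * n * δ1 / ((1 - b) * πrMin * πcMin)
          + 97 * n * δ2 / ((1 - b) * πcMin)
          + 26 * δ3 / ((1 - b) * πcMin)) ≤ 1/100 := by
    rw [hR]; linarith [hT1, hT2, hT3]
  exact ⟨by linarith [hLHS, hRle], by linarith [hRle]⟩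
end

section
/- Let A be an n×n real matrix that is row stochastic (all entries nonnegative and each row sums to 1) and primitive (there exists a positive integer K such that every entry of A^K is strictly positive), and let π ∈ ℝ^n have all entries positive, entries summing to 1, and satisfy π^T A = π^T. Then every complex eigenvalue of the matrix A − 𝟙 π^T has modulus strictly less than 1, where 𝟙 π^T is the rank-one matrix whose (i,j) entry is π_j; equivalently, the spectral radius of A − 𝟙 π^T is strictly less than 1. -/
/-!
If `(A - 𝟙πᵀ) v = z v` with `z ≠ 0`, then `πᵀ (A - 𝟙πᵀ) = 0` forces `πᵀ v = 0`, so `v` is also an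
eigenvector of `A` and `A ^ K v = z ^ K v`. At a coordinate where `‖v i‖` is maximal, `z ^ K v i` is
an average of all the `v j` with the positive weights `(A ^ K) i j`; by strict convexity of the norm
on `ℂ` this is impossible when `‖z‖ ≥ 1` unless `v` is constant, and then `πᵀ v = 0` gives `v = 0`.
-/

namespace Matrix

variable {ι : Type*} [Fintype ι]

theorem pow_mulVec_eq_pow_smul {R : Type*} [CommSemiring R] [DecidableEq ι]
    {A : Matrix ι ι R} {v : ι → R} {c : R} (h : A *ᵥ v = c • v) (k : ℕ) :
    (A ^ k) *ᵥ v = c ^ k • v := by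
  induction k with
  | zero => simp
  | succ k ih => rw [pow_succ, ← mulVec_mulVec, h, mulVec_smul, ih, smul_smul, pow_succ']

theorem exists_mulVec_eq_smul_of_mem_spectrum {K : Type*} [Field K] [DecidableEq ι]
    {M : Matrix ι ι K} {z : K} (hz : z ∈ spectrum K M) : ∃ v ≠ 0, M *ᵥ v = z • v := by
  rw [← spectrum_toLin', ← Module.End.hasEigenvalue_iff_mem_spectrum] at hz
  obtain ⟨v, hv⟩ := hz.exists_hasEigenvector
  exact ⟨v, hv.2, by simpa using hv.apply_eq_smul⟩

theorem dotProduct_eq_zero_and_mulVec_eq_smul_of_sub_rankOne {K : Type*} [Field K]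
    {A : Matrix ι ι K} {π v : ι → K} {z : K} (hπA : π ᵥ* A = π) (hπ1 : ∑ i, π i = 1)
    (hz : z ≠ 0) (hv : (A - of fun _ j => π j) *ᵥ v = z • v) :
    π ⬝ᵥ v = 0 ∧ A *ᵥ v = z • v := by
  have hπB : π ᵥ* (A - of fun _ j => π j) = 0 := by
    rw [vecMul_sub, hπA, sub_eq_zero]
    ext j
    simp [vecMul, dotProduct, ← Finset.sum_mul, hπ1]
  have hπv : π ⬝ᵥ v = 0 := by
    have h := dotProduct_mulVec π (A - of fun _ j => π j) v
    rw [hv, hπB, zero_dotProduct, dotProduct_smul, smul_eq_mul] at h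
    exact (mul_eq_zero.mp h).resolve_left hz
  refine ⟨hπv, ?_⟩
  have hrank : (of fun _ j => π j : Matrix ι ι K) *ᵥ v = 0 := by
    ext i; simpa [mulVec, dotProduct] using hπv
  rwa [sub_mulVec, hrank, sub_zero] at hv

theorem apply_eq_of_mulVec_eq_smul_of_pos {P : Matrix ι ι ℝ} (hpos : ∀ i j, 0 < P i j)
    (hrow : ∀ i, ∑ j, P i j = 1) {v : ι → ℂ} {c : ℂ} (hc : 1 ≤ ‖c‖)
    (hv : P.map (↑) *ᵥ v = c • v) (i j : ι) : v i = v j := by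
  by_contra hij
  obtain ⟨i₀, -, hmax⟩ := Finset.univ.exists_max_image (‖v ·‖) ⟨i, Finset.mem_univ i⟩
  have hlt : ‖∑ k, P i₀ k • v k‖ < ‖v i₀‖ :=
    norm_sum_lt_of_strictConvexSpace (fun k _ => (hpos i₀ k).le) (hrow i₀)
      (Finset.mem_univ i) (Finset.mem_univ j) hij (hpos i₀ i).ne' (hpos i₀ j).ne'
      (fun k _ => hmax k (Finset.mem_univ k))
  have heq : ∑ k, P i₀ k • v k = c * v i₀ := by
    simpa [mulVec, dotProduct, Complex.real_smul] using congrFun hv i₀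
  rw [heq, norm_mul] at hlt
  exact (le_mul_of_one_le_left (norm_nonneg _) hc).not_gt hlt

theorem norm_lt_one_of_mem_spectrum_map_sub_rankOne [DecidableEq ι]
    {A : Matrix ι ι ℝ} (hArow : ∀ i, ∑ j, A i j = 1) {K : ℕ} (hAK : ∀ i j, 0 < (A ^ K) i j)
    {π : ι → ℝ} (hπsum : ∑ i, π i = 1) (hπA : π ᵥ* A = π) {z : ℂ}
    (hz : z ∈ spectrum ℂ ((A - of fun _ j => π j).map ((↑) : ℝ → ℂ))) : ‖z‖ < 1 := by
  by_contra! hz1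
  set πc : ι → ℂ := fun j => (π j : ℂ)
  have hπA' : πc ᵥ* A.map (↑) = πc := by
    ext j
    simpa [πc, vecMul, dotProduct] using congrArg (fun w : ι → ℝ => (w j : ℂ)) hπA
  have hπsum' : ∑ i, πc i = 1 := by simp only [πc]; exact_mod_cast hπsum
  have hAK_row : ∀ i, ∑ j, (A ^ K) i j = 1 := by
    have h1 : A *ᵥ 1 = (1 : ℝ) • 1 := by ext i; simpa [mulVec, dotProduct] using hArow i
    simpa [funext_iff, mulVec, dotProduct] using pow_mulVec_eq_pow_smul h1 K
  rw [Matrix.map_sub _ Complex.ofReal_sub] at hz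
  obtain ⟨v, hv0, hv⟩ := exists_mulVec_eq_smul_of_mem_spectrum hz
  obtain ⟨hπv, hAv⟩ := dotProduct_eq_zero_and_mulVec_eq_smul_of_sub_rankOne hπA' hπsum'
    (norm_pos_iff.mp (one_pos.trans_le hz1)) hv
  have hAKv : (A ^ K).map (↑) *ᵥ v = z ^ K • v := by
    rw [show (A ^ K).map ((↑) : ℝ → ℂ) = A.map (↑) ^ K from Matrix.map_pow A Complex.ofRealHom K]
    exact pow_mulVec_eq_pow_smul hAv K
  have hconst := apply_eq_of_mulVec_eq_smul_of_pos hAK hAK_row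
    (by simpa using one_le_pow₀ (n := K) hz1) hAKv
  refine hv0 (funext fun j => ?_)
  simpa [dotProduct, hconst _ j, ← Finset.sum_mul, hπsum'] using hπv

end Matrix

theorem spectrum.spectralRadius_lt_of_finite {𝕜 A : Type*} [NormedField 𝕜] [Ring A] [Algebra 𝕜 A]
    {a : A} (hfin : (spectrum 𝕜 a).Finite) {r : NNReal} (hr : 0 < r)
    (h : ∀ z ∈ spectrum 𝕜 a, ‖z‖₊ < r) : spectralRadius 𝕜 a < r := by
  rcases (spectrum 𝕜 a).eq_empty_or_nonempty with hempty | hne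
  · simp [spectralRadius, hempty, hr]
  obtain ⟨z₀, hz₀, hmax⟩ := Set.exists_max_image _ (‖·‖₊) hfin hne
  calc spectralRadius 𝕜 a ≤ ‖z₀‖₊ := iSup₂_le fun z hz => ENNReal.coe_le_coe.mpr (hmax z hz)
    _ < r := ENNReal.coe_lt_coe.mpr (h z₀ hz₀)

theorem primitive_row_stochastic_residual_spectrum_lt_one_general
    (n : ℕ)
    (A : Matrix (Fin n) (Fin n) ℝ)
    (hArow : ∀ i, ∑ j, A i j = 1)
    (hprim : ∃ K : ℕ, 0 < K ∧ ∀ i j, 0 < (A^K) i j)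
    (π : Fin n → ℝ) (hπsum : ∑ i, π i = 1)
    (hπA : ∀ j, ∑ i, π i * A i j = π j) :
    (∀ z ∈ spectrum ℂ ((A - Matrix.of fun _ j => π j).map (fun r => (r : ℂ))), ‖z‖ < 1) ∧
      spectralRadius ℂ ((A - Matrix.of fun _ j => π j).map (fun r => (r : ℂ))) < 1 := by
  obtain ⟨K, -, hAK⟩ := hprim
  have hspec := fun z (hz : z ∈ spectrum ℂ _) =>
    Matrix.norm_lt_one_of_mem_spectrum_map_sub_rankOne hArow hAK hπsum (funext hπA) hz
  exact ⟨hspec, spectrum.spectralRadius_lt_of_finite (Matrix.finite_spectrum _) one_pos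
    fun z hz => mod_cast hspec z hz⟩

/-- If `A` is a primitive row stochastic matrix with positive left
eigenvector `π` (entries summing to 1, `π^T A = π^T`), then every complex eigenvalue
of `A − 𝟙 π^T` has modulus strictly less than 1; equivalently the spectral radius of
`A − 𝟙 π^T` is strictly less than 1. -/
theorem primitive_row_stochastic_residual_spectrum_lt_one
    (n : ℕ) (hn : 0 < n)
    (A : Matrix (Fin n) (Fin n) ℝ)
    (hAnn : ∀ i j, 0 ≤ A i j) (hArow : ∀ i, ∑ j, A i j = 1)
    (hprim : ∃ K : ℕ, 0 < K ∧ ∀ i j, 0 < (A^K) i j)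
    (π : Fin n → ℝ) (hπ : ∀ i, 0 < π i) (hπsum : ∑ i, π i = 1)
    (hπA : ∀ j, ∑ i, π i * A i j = π j) :
    (∀ z ∈ spectrum ℂ ((A - Matrix.of fun _ j => π j).map (fun r => (r : ℂ))), ‖z‖ < 1) ∧
      spectralRadius ℂ ((A - Matrix.of fun _ j => π j).map (fun r => (r : ℂ))) < 1 :=
  primitive_row_stochastic_residual_spectrum_lt_one_general n A hArow hprim π hπsum hπA
end
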